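/- arXiv:2604.00697 — 5 statements merged into one kernel-verified Lean document; each statement's English description precedes it below -/
import Mathlib

section
/- Let A be an n×n symmetric positive definite matrix and T a symmetric positive semidefinite matrix. Then for every vector k ∈ ℝⁿ, kᵀ(2T − T·A·T)k ≤ kᵀA⁻¹k. -/
open Matrix

theorem stmt_1 {n : ℕ} (A T : Matrix (Fin n) (Fin n) ℝ)
    (hA : A.PosDef) (hT : T.PosSemidef) (k : Fin n → ℝ) :
    k ⬝ᵥ ((2 • T - T * A * T) *ᵥ k) ≤ k ⬝ᵥ (A⁻¹ *ᵥ k) := by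
  set M : Matrix (Fin n) (Fin n) ℝ := A⁻¹ - T with hM
  have hdet : IsUnit A.det := isUnit_iff_ne_zero.mpr hA.det_pos.ne'
  have hAt : Aᵀ = A := by
    have := hA.1
    simpa [Matrix.IsHermitian, Matrix.conjTranspose_eq_transpose_of_trivial] using this
  have hTt : Tᵀ = T := by
    have := hT.1
    simpa [Matrix.IsHermitian, Matrix.conjTranspose_eq_transpose_of_trivial] using this
  have hMsym : Mᵀ = M := by
    rw [hM, transpose_sub, transpose_nonsing_inv, hAt, hTt]
  have hMAM : M * A * M = A⁻¹ - 2 • T + T * A * T := by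
    have h1 : M * A = 1 - T * A := by
      rw [hM, sub_mul, Matrix.nonsing_inv_mul A hdet]
    rw [h1, sub_mul, Matrix.one_mul, hM, mul_sub,
      Matrix.mul_nonsing_inv_cancel_right _ _ hdet, two_smul]
    abel
  have h0 : 0 ≤ (M *ᵥ k) ⬝ᵥ (A *ᵥ (M *ᵥ k)) := by simpa using hA.posSemidef.dotProduct_mulVec_nonneg (M *ᵥ k)
  have heq : (M *ᵥ k) ⬝ᵥ (A *ᵥ (M *ᵥ k)) = k ⬝ᵥ ((M * A * M) *ᵥ k) := by
    nth_rewrite 1 [← hMsym]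
    rw [mulVec_transpose, ← Matrix.dotProduct_mulVec, mulVec_mulVec, mulVec_mulVec]
  rw [heq, hMAM] at h0
  have hsplit : k ⬝ᵥ ((A⁻¹ - 2 • T + T * A * T) *ᵥ k)
      = k ⬝ᵥ (A⁻¹ *ᵥ k) - k ⬝ᵥ ((2 • T - T * A * T) *ᵥ k) := by
    rw [Matrix.add_mulVec, Matrix.sub_mulVec, Matrix.sub_mulVec,
      dotProduct_add, dotProduct_sub, dotProduct_sub]
    ring
  rw [hsplit] at h0
  linarith
end

section
/- Let K be symmetric PSD, S' diagonal positive definite, σ > 0, K̃₋ = K + S', K̃ = K̃₋ + σ²I, and let T be any n×n matrix. Then for every vector k ∈ ℝⁿ: (1/σ²)(kᵀk − 2kᵀT K̃₋ k + kᵀ T K̃₋ K̃ Tᵀ k) ≥ kᵀ K̃⁻¹ k, where the left side uses the symmetrized bilinear forms; precisely, writing δ = Tᵀk − K̃⁻¹k, the left side equals kᵀK̃⁻¹k + (1/σ²) δᵀ K̃₋ K̃ δ ≥ kᵀK̃⁻¹k. -/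
open Matrix

private lemma aux_mv {n : ℕ} (A : Matrix (Fin n) (Fin n) ℝ) (x y : Fin n → ℝ) :
    (A *ᵥ x) ⬝ᵥ y = x ⬝ᵥ (Aᵀ *ᵥ y) := by
  rw [dotProduct_mulVec, vecMul_transpose]

private lemma aux_tr {n : ℕ} (A : Matrix (Fin n) (Fin n) ℝ) (x : Fin n → ℝ) :
    x ⬝ᵥ (A *ᵥ x) = x ⬝ᵥ (Aᵀ *ᵥ x) := by
  rw [← aux_mv, dotProduct_comm]

private lemma aux_symm {n : ℕ} {A : Matrix (Fin n) (Fin n) ℝ} (hA : Aᵀ = A)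
    (x y : Fin n → ℝ) : x ⬝ᵥ (A *ᵥ y) = y ⬝ᵥ (A *ᵥ x) := by
  conv_lhs => rw [← hA]
  rw [← aux_mv, dotProduct_comm]

theorem stmt_7 {n : ℕ} (K S' T : Matrix (Fin n) (Fin n) ℝ) (σ : ℝ)
    (hK : K.PosSemidef) (hS' : ∀ i j, i ≠ j → S' i j = 0) (hS'pos : ∀ i, 0 < S' i i)
    (hσ : 0 < σ) (hT : T.IsSymm) (k : Fin n → ℝ) :
    let Km := K + S'
    let Kt := Km + σ ^ 2 • (1 : Matrix (Fin n) (Fin n) ℝ)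
    let δ := Tᵀ *ᵥ k - Kt⁻¹ *ᵥ k
    (1 / σ ^ 2) * (k ⬝ᵥ k - 2 * (k ⬝ᵥ ((T * Km) *ᵥ k)) + k ⬝ᵥ ((T * Km * Kt * Tᵀ) *ᵥ k)) =
        k ⬝ᵥ (Kt⁻¹ *ᵥ k) + (1 / σ ^ 2) * (δ ⬝ᵥ ((Km * Kt) *ᵥ δ)) ∧
      k ⬝ᵥ (Kt⁻¹ *ᵥ k) ≤
        (1 / σ ^ 2) * (k ⬝ᵥ k - 2 * (k ⬝ᵥ ((T * Km) *ᵥ k)) + k ⬝ᵥ ((T * Km * Kt * Tᵀ) *ᵥ k)) := by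
  intro Km Kt δ
  have hS'diag : S' = diagonal (fun i => S' i i) := by
    ext i j
    by_cases h : i = j
    · subst h; simp
    · simp [diagonal, h, hS' i j h]
  have hS'psd : S'.PosSemidef := by
    rw [hS'diag]
    exact PosSemidef.diagonal (fun i => (hS'pos i).le)
  have hKmpsd : Km.PosSemidef := hK.add hS'psd
  have hKm : Kmᵀ = Km := hKmpsd.isHermitian
  have hIpd : (σ ^ 2 • (1 : Matrix (Fin n) (Fin n) ℝ)).PosDef := by
    rw [smul_one_eq_diagonal]
    exact PosDef.diagonal (fun i => by positivity)
  have hKtpd : Kt.PosDef := Matrix.PosDef.posSemidef_add hKmpsd hIpd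
  have hKt : Ktᵀ = Kt := hKtpd.isHermitian
  have hdet : IsUnit Kt.det := isUnit_iff_ne_zero.mpr (ne_of_gt hKtpd.det_pos)
  have hinv1 : Kt * Kt⁻¹ = 1 := mul_nonsing_inv _ hdet
  have hinv2 : Kt⁻¹ * Kt = 1 := nonsing_inv_mul _ hdet
  have hKtinv : (Kt⁻¹)ᵀ = Kt⁻¹ := by rw [transpose_nonsing_inv, hKt]
  have hcomm : Km * Kt = Kt * Km := by
    show Km * (Km + σ ^ 2 • 1) = (Km + σ ^ 2 • 1) * Km
    simp [Matrix.mul_add, Matrix.add_mul, Matrix.mul_smul, Matrix.smul_mul]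
  have hcomminv : Kt⁻¹ * Km = Km * Kt⁻¹ := by
    calc Kt⁻¹ * Km = Kt⁻¹ * Km * (Kt * Kt⁻¹) := by rw [hinv1, Matrix.mul_one]
    _ = Kt⁻¹ * (Km * Kt) * Kt⁻¹ := by simp only [Matrix.mul_assoc]
    _ = Kt⁻¹ * Kt * (Km * Kt⁻¹) := by rw [hcomm]; simp only [Matrix.mul_assoc]
    _ = Km * Kt⁻¹ := by rw [hinv2, Matrix.one_mul]
  have hMsymm : (Km * Kt)ᵀ = Km * Kt := by
    rw [transpose_mul, hKm, hKt, ← hcomm]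
  have hinvM : Kt⁻¹ * (Km * Kt) = Km := by
    rw [← Matrix.mul_assoc, hcomminv, Matrix.mul_assoc, hinv2, Matrix.mul_one]
  set u := Tᵀ *ᵥ k with hu
  set v := Kt⁻¹ *ᵥ k with hv
  have hδ : δ = u - v := rfl
  have e1 : u ⬝ᵥ ((Km * Kt) *ᵥ u) = k ⬝ᵥ ((T * Km * Kt * Tᵀ) *ᵥ k) := by
    rw [hu, aux_mv, transpose_transpose, mulVec_mulVec, mulVec_mulVec]
    simp only [Matrix.mul_assoc]
  have e2 : v ⬝ᵥ ((Km * Kt) *ᵥ u) = k ⬝ᵥ ((T * Km) *ᵥ k) := by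
    rw [hv, aux_mv, hKtinv, hu, mulVec_mulVec, mulVec_mulVec, hinvM]
    rw [aux_tr, transpose_mul, transpose_transpose, hKm]
  have e3 : u ⬝ᵥ ((Km * Kt) *ᵥ v) = v ⬝ᵥ ((Km * Kt) *ᵥ u) := aux_symm hMsymm u v
  have e4 : v ⬝ᵥ ((Km * Kt) *ᵥ v) = k ⬝ᵥ ((Km * Kt⁻¹) *ᵥ k) := by
    rw [hv, aux_mv, hKtinv, mulVec_mulVec, mulVec_mulVec, hinvM]
  have e5 : k ⬝ᵥ k = k ⬝ᵥ ((Km * Kt⁻¹) *ᵥ k) + σ ^ 2 * (k ⬝ᵥ (Kt⁻¹ *ᵥ k)) := by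
    have h1 : Km * Kt⁻¹ + σ ^ 2 • Kt⁻¹ = 1 := by
      have e : (Km + σ ^ 2 • (1 : Matrix (Fin n) (Fin n) ℝ)) * Kt⁻¹ =
          Km * Kt⁻¹ + σ ^ 2 • Kt⁻¹ := by
        rw [Matrix.add_mul, Matrix.smul_mul, Matrix.one_mul]
      rw [← e]
      exact hinv1
    calc k ⬝ᵥ k = k ⬝ᵥ ((Km * Kt⁻¹ + σ ^ 2 • Kt⁻¹) *ᵥ k) := by rw [h1, one_mulVec]
    _ = k ⬝ᵥ ((Km * Kt⁻¹) *ᵥ k) + σ ^ 2 * (k ⬝ᵥ (Kt⁻¹ *ᵥ k)) := by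
        rw [add_mulVec, dotProduct_add, smul_mulVec, dotProduct_smul, smul_eq_mul]
  have hexp : δ ⬝ᵥ ((Km * Kt) *ᵥ δ) =
      k ⬝ᵥ ((T * Km * Kt * Tᵀ) *ᵥ k) - 2 * (k ⬝ᵥ ((T * Km) *ᵥ k)) + k ⬝ᵥ ((Km * Kt⁻¹) *ᵥ k) := by
    rw [hδ, mulVec_sub, sub_dotProduct, dotProduct_sub, dotProduct_sub, e1, e2, e3, e2, e4]
    ring
  have hnneg : 0 ≤ δ ⬝ᵥ ((Km * Kt) *ᵥ δ) := by
    have h1 : Km * Kt = Km * Km + σ ^ 2 • Km := by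
      have e : Km * (Km + σ ^ 2 • (1 : Matrix (Fin n) (Fin n) ℝ)) =
          Km * Km + σ ^ 2 • Km := by
        rw [Matrix.mul_add, Matrix.mul_smul, Matrix.mul_one]
      exact e
    rw [h1, add_mulVec, dotProduct_add]
    have h2 : 0 ≤ δ ⬝ᵥ ((Km * Km) *ᵥ δ) := by
      have e : (Km *ᵥ δ) ⬝ᵥ (Km *ᵥ δ) = δ ⬝ᵥ ((Km * Km) *ᵥ δ) := by
        rw [aux_mv, hKm, mulVec_mulVec]
      rw [← e]
      exact Finset.sum_nonneg fun i _ => mul_self_nonneg _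
    have h3 : 0 ≤ δ ⬝ᵥ ((σ ^ 2 • Km) *ᵥ δ) := by
      rw [smul_mulVec, dotProduct_smul, smul_eq_mul]
      have h4 := hKmpsd.dotProduct_mulVec_nonneg δ
      simp only [star_trivial] at h4
      positivity
    linarith
  have hσ2 : (0:ℝ) < σ ^ 2 := by positivity
  have heq : (1 / σ ^ 2) * (k ⬝ᵥ k - 2 * (k ⬝ᵥ ((T * Km) *ᵥ k)) + k ⬝ᵥ ((T * Km * Kt * Tᵀ) *ᵥ k)) =
      k ⬝ᵥ (Kt⁻¹ *ᵥ k) + (1 / σ ^ 2) * (δ ⬝ᵥ ((Km * Kt) *ᵥ δ)) := by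
    rw [hexp, e5]
    field_simp
    ring
  refine ⟨heq, ?_⟩
  rw [heq]
  have h5 : 0 ≤ (1 / σ ^ 2) * (δ ⬝ᵥ ((Km * Kt) *ᵥ δ)) :=
    mul_nonneg (le_of_lt (one_div_pos.mpr hσ2)) hnneg
  linarith
end

section
/- With the notation of the previous statement (T symmetric, K̃ = K̃₋ + σ²I symmetric positive definite), the difference between the upper bound U = k_nn − kᵀ(2T − T K̃ T)k and the lower bound L = k_nn − (1/σ²)(kᵀk − 2kᵀT K̃₋ k + kᵀT K̃₋ K̃ T k) equals (1/σ²)‖(I − K̃·T)k‖², i.e., U − L = ‖(I − K̃T)k‖²/σ². -/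
/-!
Since `K̃₋ = K̃ - σ²I`, the matrix of the quadratic form `σ²(U - L)` is
`(I - TK̃)(I - K̃T) + (K̃T - TK̃)`. For symmetric `T` and `K̃` the first summand is
`(I - K̃T)ᵀ(I - K̃T)`, whose form is `‖(I - K̃T)k‖²`, and the second is antisymmetric,
so its form vanishes.
-/

open Matrix

namespace Matrix

variable {m R : Type*} [Fintype m] [CommRing R]

theorem dotProduct_transpose_mulVec_self (A : Matrix m m R) (x : m → R) :
    x ⬝ᵥ (Aᵀ *ᵥ x) = x ⬝ᵥ (A *ᵥ x) := by
  rw [mulVec_transpose, dotProduct_mulVec, dotProduct_comm]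

theorem dotProduct_sub_transpose_mulVec_self (A : Matrix m m R) (x : m → R) :
    x ⬝ᵥ ((A - Aᵀ) *ᵥ x) = 0 := by
  rw [sub_mulVec, dotProduct_sub, dotProduct_transpose_mulVec_self, sub_self]

theorem mulVec_dotProduct_mulVec_self (A : Matrix m m R) (x : m → R) :
    (A *ᵥ x) ⬝ᵥ (A *ᵥ x) = x ⬝ᵥ ((Aᵀ * A) *ᵥ x) := by
  rw [← mulVec_mulVec, mulVec_transpose, dotProduct_comm x, ← dotProduct_mulVec]

end Matrix

section BoundGap

variable {m R : Type*} [Fintype m] [DecidableEq m] [CommRing R]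

theorem bound_gap_matrix_eq {Km T Kt : Matrix m m R} {s : R} (hKt : Kt = Km + s • 1) :
    1 - 2 • (T * Km) + T * Km * Kt * T - s • (2 • T - T * Kt * T)
      = (1 - T * Kt) * (1 - Kt * T) + (Kt * T - T * Kt) := by
  subst hKt
  simp only [mul_add, add_mul, mul_sub, sub_mul, Matrix.mul_smul, Matrix.smul_mul, mul_one,
    one_mul, smul_add, smul_sub, mul_assoc]
  module

theorem bound_gap_quadratic_eq {Km T Kt : Matrix m m R} {s : R} (hKt : Kt = Km + s • 1)
    (hKm : Km.IsSymm) (hT : T.IsSymm) (k : m → R) :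
    k ⬝ᵥ k - 2 * (k ⬝ᵥ ((T * Km) *ᵥ k)) + k ⬝ᵥ ((T * Km * Kt * T) *ᵥ k)
        - s * (k ⬝ᵥ ((2 • T - T * Kt * T) *ᵥ k))
      = ((1 - Kt * T) *ᵥ k) ⬝ᵥ ((1 - Kt * T) *ᵥ k) := by
  have hKtT : (Kt * T)ᵀ = T * Kt := by
    rw [transpose_mul, hT.eq, hKt, (hKm.add (isSymm_one.smul s)).eq]
  calc _ = k ⬝ᵥ ((1 - 2 • (T * Km) + T * Km * Kt * T - s • (2 • T - T * Kt * T)) *ᵥ k) := by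
        simp only [two_nsmul, add_mulVec, sub_mulVec, smul_mulVec, one_mulVec, dotProduct_add,
          dotProduct_sub, dotProduct_smul, smul_eq_mul]
        ring
    _ = k ⬝ᵥ (((1 - Kt * T)ᵀ * (1 - Kt * T) + (Kt * T - (Kt * T)ᵀ)) *ᵥ k) := by
        rw [transpose_sub, transpose_one, hKtT, bound_gap_matrix_eq hKt]
    _ = _ := by
        rw [add_mulVec, dotProduct_add, dotProduct_sub_transpose_mulVec_self, add_zero,
          mulVec_dotProduct_mulVec_self]

end BoundGap

theorem stmt_8 {n : ℕ} (Km T : Matrix (Fin n) (Fin n) ℝ) (σ knn : ℝ)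
    (hKm : Km.PosDef) (hσ : 0 < σ) (hT : T.IsSymm) (k : Fin n → ℝ) :
    let Kt := Km + σ ^ 2 • (1 : Matrix (Fin n) (Fin n) ℝ)
    let U := knn - k ⬝ᵥ ((2 • T - T * Kt * T) *ᵥ k)
    let L := knn - (1 / σ ^ 2) *
      (k ⬝ᵥ k - 2 * (k ⬝ᵥ ((T * Km) *ᵥ k)) + k ⬝ᵥ ((T * Km * Kt * T) *ᵥ k))
    let v := ((1 : Matrix (Fin n) (Fin n) ℝ) - Kt * T) *ᵥ k
    U - L = (v ⬝ᵥ v) / σ ^ 2 := by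
  intro Kt U L v
  have hKm_symm : Km.IsSymm := (conjTranspose_eq_transpose_of_trivial Km).symm.trans hKm.isHermitian
  have hgap := bound_gap_quadratic_eq (Kt := Kt) rfl hKm_symm hT k
  have hσ2 : σ ^ 2 ≠ 0 := by positivity
  rw [sub_sub_sub_cancel_left, ← hgap]
  field_simp
end

section
/- Let K be symmetric positive definite, R invertible, k ∈ ℝⁿ, and S̃ symmetric positive semidefinite. Then k_nn − kᵀ(K⁻¹ − R S̃ Rᵀ)k ≤ k_nn + kᵀ R (Rᵀ K R − 2I + S̃) Rᵀ k, i.e., −kᵀK⁻¹k ≤ kᵀR(RᵀKR − 2I)Rᵀk, with equality when R Rᵀ = K⁻¹. -/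
open Matrix

theorem stmt_12 {n : ℕ} (K R : Matrix (Fin n) (Fin n) ℝ)
    (hK : K.PosDef) (hR : IsUnit R) (k : Fin n → ℝ) :
    -(k ⬝ᵥ (K⁻¹ *ᵥ k)) ≤
        k ⬝ᵥ ((R * (Rᵀ * K * R - 2 • (1 : Matrix (Fin n) (Fin n) ℝ)) * Rᵀ) *ᵥ k) ∧
      (R * Rᵀ = K⁻¹ →
        -(k ⬝ᵥ (K⁻¹ *ᵥ k)) =
          k ⬝ᵥ ((R * (Rᵀ * K * R - 2 • (1 : Matrix (Fin n) (Fin n) ℝ)) * Rᵀ) *ᵥ k)) := by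
  have hKu : IsUnit K.det := isUnit_iff_isUnit_det K |>.mp hK.isUnit
  have h1 : K * K⁻¹ = 1 := Matrix.mul_nonsing_inv K hKu
  have h2 : K⁻¹ * K = 1 := Matrix.nonsing_inv_mul K hKu
  have hinvT : K⁻¹ᵀ = K⁻¹ := by
    have : Kᵀ = K := hK.isHermitian.eq
    rw [Matrix.transpose_nonsing_inv, this]
  set M : Matrix (Fin n) (Fin n) ℝ := R * Rᵀ - K⁻¹ with hM
  have key : R * (Rᵀ * K * R - 2 • (1 : Matrix (Fin n) (Fin n) ℝ)) * Rᵀ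
      = Mᵀ * K * M - K⁻¹ := by
    rw [hM, transpose_sub, transpose_mul, transpose_transpose, hinvT]
    have : (R * Rᵀ - K⁻¹) * K * (R * Rᵀ - K⁻¹)
        = R * Rᵀ * K * (R * Rᵀ) - R * Rᵀ * (K * K⁻¹) - K⁻¹ * K * (R * Rᵀ) + K⁻¹ * K * K⁻¹ := by
      noncomm_ring
    rw [this, h1, h2]
    noncomm_ring
  have quad : ∀ v : Fin n → ℝ, k ⬝ᵥ ((Mᵀ * K * M) *ᵥ k) = (M *ᵥ k) ⬝ᵥ (K *ᵥ (M *ᵥ k)) := by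
    intro v
    rw [← Matrix.mulVec_mulVec, ← Matrix.mulVec_mulVec, Matrix.dotProduct_mulVec,
      Matrix.vecMul_transpose]
  constructor
  · rw [key, Matrix.sub_mulVec, dotProduct_sub, quad k]
    have h0 : 0 ≤ (M *ᵥ k) ⬝ᵥ (K *ᵥ (M *ᵥ k)) := by
      rcases eq_or_ne (M *ᵥ k) 0 with h | h
      · simp [h]
      · exact le_of_lt (by simpa using hK.dotProduct_mulVec_pos h)
    linarith
  · intro h
    rw [key, hM, h]
    simp [Matrix.neg_mulVec]
end

section
/- Let A be symmetric positive definite and L invertible lower triangular with positive diagonal such that the natural gradient G̃ = L·[tril(LᵀAL) − (1/2)(I + diag(LᵀAL))] vanishes. Then L·Lᵀ = A⁻¹. -/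
open Matrix

/-- Lower triangular part of a matrix (including the diagonal). -/
def tril {n : ℕ} (M : Matrix (Fin n) (Fin n) ℝ) : Matrix (Fin n) (Fin n) ℝ :=
  fun i j => if j ≤ i then M i j else 0

/-- Diagonal part of a matrix. -/
def diagPart {n : ℕ} (M : Matrix (Fin n) (Fin n) ℝ) : Matrix (Fin n) (Fin n) ℝ :=
  Matrix.diagonal fun i => M i i

theorem eq_one_of_tril_eq_half_smul_one_add_diagPart {n : ℕ} {M : Matrix (Fin n) (Fin n) ℝ}
    (hM : Mᵀ = M) (h : tril M = (1 / 2 : ℝ) • (1 + diagPart M)) : M = 1 := by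
  have lower : ∀ i j, j ≤ i → M i j = (1 : Matrix (Fin n) (Fin n) ℝ) i j := by
    intro i j hji
    have hij := congrFun₂ h i j
    rcases hji.eq_or_lt with rfl | hlt
    · simp only [tril, le_refl, ↓reduceIte, diagPart, Matrix.smul_apply, Matrix.add_apply,
        one_apply_eq, diagonal_apply_eq, smul_eq_mul] at hij ⊢
      linarith
    · simpa [tril, diagPart, hji, hlt.ne'] using hij
  ext i j
  rcases le_total j i with hji | hij
  · exact lower i j hji
  · calc M i j = M j i := congrFun₂ hM j i
      _ = (1 : Matrix (Fin n) (Fin n) ℝ) j i := lower j i hij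
      _ = (1 : Matrix (Fin n) (Fin n) ℝ) i j := congrFun₂ transpose_one i j

-- `Lᵀ A` is a left inverse of `L`, hence also a right inverse since `L` is square.
theorem mul_transpose_eq_inv_of_transpose_mul_mul_eq_one {m R : Type*} [Fintype m]
    [DecidableEq m] [CommRing R] {A L : Matrix m m R} (h : Lᵀ * A * L = 1) :
    L * Lᵀ = A⁻¹ := by
  have hLLtA : L * (Lᵀ * A) = 1 := mul_eq_one_comm.mp h
  exact (inv_eq_left_inv (by rwa [← Matrix.mul_assoc] at hLLtA)).symm

theorem stmt_14_general {n : ℕ} (A L : Matrix (Fin n) (Fin n) ℝ)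
    (hA : A.PosDef) (hL : IsUnit L)
    (hG : L * (tril (Lᵀ * A * L) -
        (1 / 2 : ℝ) • ((1 : Matrix (Fin n) (Fin n) ℝ) + diagPart (Lᵀ * A * L))) = 0) :
    L * Lᵀ = A⁻¹ := by
  have hAt : Aᵀ = A := hA.isHermitian.eq
  have hsymm : (Lᵀ * A * L)ᵀ = Lᵀ * A * L := by
    rw [transpose_mul, transpose_mul, transpose_transpose, hAt, Matrix.mul_assoc]
  apply mul_transpose_eq_inv_of_transpose_mul_mul_eq_one
  exact eq_one_of_tril_eq_half_smul_one_add_diagPart hsymm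
    (sub_eq_zero.mp (hL.mul_right_eq_zero.mp hG))

theorem stmt_14 {n : ℕ} (A L : Matrix (Fin n) (Fin n) ℝ)
    (hA : A.PosDef) (hLtri : ∀ i j : Fin n, i < j → L i j = 0)
    (hLdiag : ∀ i : Fin n, 0 < L i i) (hL : IsUnit L)
    (hG : L * (tril (Lᵀ * A * L) -
        (1 / 2 : ℝ) • ((1 : Matrix (Fin n) (Fin n) ℝ) + diagPart (Lᵀ * A * L))) = 0) :
    L * Lᵀ = A⁻¹ :=
  stmt_14_general A L hA hL hG
end
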